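/- arXiv:2206.09568 — 3 statements merged into one kernel-verified Lean document; each statement's English description precedes it below -/
import Mathlib

section
/- Let d ≥ 1, let ρ, e : ℝ^d → ℝ be differentiable, let S : ℝ² → ℝ be twice continuously differentiable, let ε > 0, set s(x) := S(ρ(x),e(x)) and l := ε∇(ρe). Then at every point x ∈ ℝ^d, −ε∇ρ · ∇[(e·S_e − ρ·S_ρ)∘(ρ,e)] + l · ∇[S_e∘(ρ,e)] + ε∇ρ · ∇s = ε[(ρ S_ρρ + 2 S_ρ)|∇ρ|² + 2 ρ S_ρe (∇ρ · ∇e) + ρ S_ee |∇e|²], where all partial derivatives S_ρ, S_e, S_ρρ, S_ρe, S_ee are evaluated at (ρ(x), e(x)). -/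
/-
Expand every spatial derivative by the chain rule through `(ρ, e)` and the product rule, and use
the symmetry `S_ρe = S_eρ` of the Hessian of a `C²` function. The terms carrying `e` or `S_e`
then cancel within each summand, leaving `(ρ S_ρρ + 2 S_ρ)(∂ᵢρ)² + 2ρ S_ρe ∂ᵢρ ∂ᵢe + ρ S_ee (∂ᵢe)²`.
-/

open scoped BigOperators

/-- Spatial partial derivative `∂_i f (x)` of a scalar field on `ℝ^d`. -/
noncomputable def spd {d : ℕ} (f : (Fin d → ℝ) → ℝ) (i : Fin d) (x : Fin d → ℝ) : ℝ :=
  fderiv ℝ f x (Pi.single i 1)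

/-- First partial derivative of `S(ρ,e)` in the first argument. -/
noncomputable def Sd1 (S : ℝ × ℝ → ℝ) (q : ℝ × ℝ) : ℝ := fderiv ℝ S q (1, 0)

/-- First partial derivative of `S(ρ,e)` in the second argument. -/
noncomputable def Sd2 (S : ℝ × ℝ → ℝ) (q : ℝ × ℝ) : ℝ := fderiv ℝ S q (0, 1)

lemma ContinuousLinearMap.apply_prodMk_eq (L : ℝ × ℝ →L[ℝ] ℝ) (a b : ℝ) :
    L (a, b) = a * L (1, 0) + b * L (0, 1) := by
  have hab : ((a, b) : ℝ × ℝ) = a • ((1 : ℝ), (0 : ℝ)) + b • ((0 : ℝ), (1 : ℝ)) := by simp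
  rw [hab, map_add, map_smul, map_smul, smul_eq_mul, smul_eq_mul]

section SpatialPartials

variable {d : ℕ} {f g ρ e : (Fin d → ℝ) → ℝ} {x : Fin d → ℝ}

lemma spd_mul (hf : DifferentiableAt ℝ f x) (hg : DifferentiableAt ℝ g x) (i : Fin d) :
    spd (fun y => f y * g y) i x = spd f i x * g x + f x * spd g i x := by
  simp only [spd, fderiv_fun_mul hf hg, add_apply, smul_apply, smul_eq_mul]
  ring

lemma spd_sub (hf : DifferentiableAt ℝ f x) (hg : DifferentiableAt ℝ g x) (i : Fin d) :
    spd (fun y => f y - g y) i x = spd f i x - spd g i x := by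
  simp only [spd, fderiv_fun_sub hf hg, sub_apply]

lemma spd_comp_prodMk {G : ℝ × ℝ → ℝ} (hρ : DifferentiableAt ℝ ρ x)
    (he : DifferentiableAt ℝ e x) (hG : DifferentiableAt ℝ G (ρ x, e x)) (i : Fin d) :
    spd (fun y => G (ρ y, e y)) i x
      = Sd1 G (ρ x, e x) * spd ρ i x + Sd2 G (ρ x, e x) * spd e i x := by
  have hcomp : HasFDerivAt (fun y => G (ρ y, e y)) _ x :=
    hG.hasFDerivAt.comp x (hρ.hasFDerivAt.prodMk he.hasFDerivAt)
  rw [spd, hcomp.fderiv, ContinuousLinearMap.comp_apply, ContinuousLinearMap.prod_apply,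
    ContinuousLinearMap.apply_prodMk_eq, Sd1, Sd2, spd, spd]
  ring

end SpatialPartials

section SecondPartials

variable {S : ℝ × ℝ → ℝ}

lemma differentiable_fderiv_apply (hS : ContDiff ℝ 2 S) (v : ℝ × ℝ) :
    Differentiable ℝ (fun p => fderiv ℝ S p v) :=
  ((hS.fderiv_right (m := 1) le_rfl).differentiable one_ne_zero).clm_apply
    (differentiable_const v)

lemma differentiable_Sd1 (hS : ContDiff ℝ 2 S) : Differentiable ℝ (Sd1 S) :=
  differentiable_fderiv_apply hS (1, 0)

lemma differentiable_Sd2 (hS : ContDiff ℝ 2 S) : Differentiable ℝ (Sd2 S) :=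
  differentiable_fderiv_apply hS (0, 1)

lemma fderiv_fderiv_apply (hS : ContDiff ℝ 2 S) (q v w : ℝ × ℝ) :
    fderiv ℝ (fun p => fderiv ℝ S p v) q w = fderiv ℝ (fderiv ℝ S) q w v := by
  have hS' := (hS.fderiv_right (m := 1) le_rfl).differentiable one_ne_zero q
  simp [fderiv_clm_apply hS' (differentiableAt_const v)]

lemma Sd1_Sd2_eq_Sd2_Sd1 (hS : ContDiff ℝ 2 S) (q : ℝ × ℝ) :
    Sd1 (Sd2 S) q = Sd2 (Sd1 S) q := by
  have hsymm := (hS.contDiffAt (x := q)).isSymmSndFDerivAt (by simp) (1, 0) (0, 1)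
  rwa [← fderiv_fderiv_apply hS, ← fderiv_fderiv_apply hS] at hsymm

end SecondPartials

theorem stmt_1_general {d : ℕ} (ρ e : (Fin d → ℝ) → ℝ) (S : ℝ × ℝ → ℝ)
    (ε : ℝ)
    (hρ : Differentiable ℝ ρ) (he : Differentiable ℝ e) (hS : ContDiff ℝ 2 S) :
    ∀ x : Fin d → ℝ,
      -(∑ i, (ε * spd ρ i x) *
          spd (fun y => e y * Sd2 S (ρ y, e y) - ρ y * Sd1 S (ρ y, e y)) i x)
        + (∑ i, (ε * spd (fun y => ρ y * e y) i x) * spd (fun y => Sd2 S (ρ y, e y)) i x)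
        + (∑ i, (ε * spd ρ i x) * spd (fun y => S (ρ y, e y)) i x)
      = ε * ((ρ x * Sd1 (Sd1 S) (ρ x, e x) + 2 * Sd1 S (ρ x, e x)) * (∑ i, (spd ρ i x) ^ 2)
          + 2 * ρ x * Sd2 (Sd1 S) (ρ x, e x) * (∑ i, spd ρ i x * spd e i x)
          + ρ x * Sd2 (Sd2 S) (ρ x, e x) * (∑ i, (spd e i x) ^ 2)) := by
  intro x
  have hρe : DifferentiableAt ℝ (fun y => (ρ y, e y)) x := (hρ x).prodMk (he x)
  have hS₁ : DifferentiableAt ℝ (fun y => Sd1 S (ρ y, e y)) x :=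
    (differentiable_Sd1 hS _).comp x hρe
  have hS₂ : DifferentiableAt ℝ (fun y => Sd2 S (ρ y, e y)) x :=
    (differentiable_Sd2 hS _).comp x hρe
  have hflux (i : Fin d) :
      spd (fun y => e y * Sd2 S (ρ y, e y) - ρ y * Sd1 S (ρ y, e y)) i x
        = spd e i x * Sd2 S (ρ x, e x) + e x * spd (fun y => Sd2 S (ρ y, e y)) i x
          - (spd ρ i x * Sd1 S (ρ x, e x) + ρ x * spd (fun y => Sd1 S (ρ y, e y)) i x) := by
    rw [spd_sub ((he x).fun_mul hS₂) ((hρ x).fun_mul hS₁), spd_mul (he x) hS₂, spd_mul (hρ x) hS₁]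
  simp only [hflux, spd_mul (hρ x) (he x),
    spd_comp_prodMk (hρ x) (he x) (hS.differentiable two_ne_zero _),
    spd_comp_prodMk (hρ x) (he x) (differentiable_Sd1 hS _),
    spd_comp_prodMk (hρ x) (he x) (differentiable_Sd2 hS _), Sd1_Sd2_eq_Sd2_Sd1 hS]
  simp only [Finset.mul_sum, ← Finset.sum_neg_distrib, ← Finset.sum_add_distrib]
  exact Finset.sum_congr rfl fun i _ => by ring

/-- the quadratic form `J₁` identity:
`−ε∇ρ·∇[(e S_e − ρ S_ρ)∘(ρ,e)] + ε∇(ρe)·∇[S_e∘(ρ,e)] + ε∇ρ·∇s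
  = ε[(ρ S_ρρ + 2 S_ρ)|∇ρ|² + 2ρ S_ρe ∇ρ·∇e + ρ S_ee |∇e|²]`. -/
theorem stmt_1 {d : ℕ} (hd : 1 ≤ d) (ρ e : (Fin d → ℝ) → ℝ) (S : ℝ × ℝ → ℝ)
    (ε : ℝ) (hε : 0 < ε)
    (hρ : Differentiable ℝ ρ) (he : Differentiable ℝ e) (hS : ContDiff ℝ 2 S) :
    ∀ x : Fin d → ℝ,
      -(∑ i, (ε * spd ρ i x) *
          spd (fun y => e y * Sd2 S (ρ y, e y) - ρ y * Sd1 S (ρ y, e y)) i x)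
        + (∑ i, (ε * spd (fun y => ρ y * e y) i x) * spd (fun y => Sd2 S (ρ y, e y)) i x)
        + (∑ i, (ε * spd ρ i x) * spd (fun y => S (ρ y, e y)) i x)
      = ε * ((ρ x * Sd1 (Sd1 S) (ρ x, e x) + 2 * Sd1 S (ρ x, e x)) * (∑ i, (spd ρ i x) ^ 2)
          + 2 * ρ x * Sd2 (Sd1 S) (ρ x, e x) * (∑ i, spd ρ i x * spd e i x)
          + ρ x * Sd2 (Sd2 S) (ρ x, e x) * (∑ i, (spd e i x) ^ 2)) :=
  stmt_1_general ρ e S ε hρ he hS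
end

section
/- Let γ > 1, ρ > 0, e > 0 and let f', f'' be real numbers (the first and second derivatives of a function f at the value s). Define the 2×2 symmetric matrix M with entries M₁₁ = (γ−1)(f' − (γ−1)f'')/ρ, M₁₂ = M₂₁ = (γ−1)f''/e, M₂₂ = ρ(f' − f'')/e². Then M is positive definite if and only if f' > 0 and f' − γ f'' > 0. -/
/-! A symmetric `2 × 2` matrix is positive definite iff its upper-left entry and its determinant
are positive (complete the square). Here `det M = (γ - 1) f' (f' - γ f'') / e²`, while `M₁₁` is a
positive multiple of `f' - (γ - 1) f''`, a convex combination of `f'` and `f' - γ f''`. So both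
are positive exactly when `f'` and `f' - γ f''` are. -/

open Matrix

lemma Matrix.isHermitian_fin_two {R : Type*} [Star R] [TrivialStar R] (a b d : R) :
    (!![a, b; b, d]).IsHermitian := by
  ext i j
  fin_cases i <;> fin_cases j <;> simp [conjTranspose_apply]

lemma Matrix.star_dotProduct_mulVec_fin_two {R : Type*} [CommRing R] [StarRing R] [TrivialStar R]
    (a b d : R) (v : Fin 2 → R) :
    star v ⬝ᵥ (!![a, b; b, d] *ᵥ v) = a * v 0 ^ 2 + 2 * b * v 0 * v 1 + d * v 1 ^ 2 := by
  simp only [star_trivial, dotProduct, mulVec, Fin.sum_univ_two, of_apply, cons_val',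
    cons_val_zero, cons_val_one, empty_val', cons_val_fin_one]
  ring

lemma Matrix.posDef_fin_two_iff {R : Type*} [CommRing R] [LinearOrder R] [IsStrictOrderedRing R]
    [StarRing R] [TrivialStar R] (a b d : R) :
    (!![a, b; b, d]).PosDef ↔ 0 < a ∧ 0 < a * d - b ^ 2 := by
  rw [posDef_iff_dotProduct_mulVec]
  simp only [isHermitian_fin_two, true_and, star_dotProduct_mulVec_fin_two]
  constructor
  · intro hQ
    have ha : 0 < a := by simpa using hQ (x := ![1, 0]) (by simp)
    refine ⟨ha, pos_of_mul_pos_right ?_ ha.le⟩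
    have hQ' := hQ (x := ![b, -a]) (by simp [ha.ne'])
    simp only [cons_val_zero, cons_val_one] at hQ'
    linear_combination hQ'
  · rintro ⟨ha, hdet⟩ v hv
    refine pos_of_mul_pos_right ?_ ha.le
    have hsquare : a * (a * v 0 ^ 2 + 2 * b * v 0 * v 1 + d * v 1 ^ 2)
        = (a * v 0 + b * v 1) ^ 2 + (a * d - b ^ 2) * v 1 ^ 2 := by ring
    rw [hsquare]
    rcases eq_or_ne (v 1) 0 with h1 | h1
    · have h0 : v 0 ≠ 0 := fun h0 => hv (by ext i; fin_cases i <;> simp [h0, h1])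
      simpa [h1] using sq_pos_of_ne_zero (mul_ne_zero ha.ne' h0)
    · exact add_pos_of_nonneg_of_pos (sq_nonneg _) (mul_pos hdet (sq_pos_of_ne_zero h1))

lemma sub_mul_pos_and_mul_sub_mul_pos_iff {K : Type*} [Field K] [LinearOrder K]
    [IsStrictOrderedRing K] {γ p q : K} (hγ : 1 < γ) :
    (0 < p - (γ - 1) * q ∧ 0 < p * (p - γ * q)) ↔ (0 < p ∧ 0 < p - γ * q) := by
  have hcomb : p - (γ - 1) * q = (1 / γ) * p + (1 - 1 / γ) * (p - γ * q) := by
    field_simp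
    ring
  have hw : 0 < 1 / γ := by positivity
  have hw' : 0 < 1 - 1 / γ := by rw [sub_pos, div_lt_one (by linarith)]; exact hγ
  constructor
  · rintro ⟨hmid, hprod⟩
    rcases mul_pos_iff.mp hprod with h | ⟨hp, hpq⟩
    · exact h
    · rw [hcomb] at hmid
      nlinarith
  · rintro ⟨hp, hpq⟩
    refine ⟨?_, mul_pos hp hpq⟩
    rw [hcomb]
    positivity

/-- for `γ > 1`, `ρ > 0`, `e > 0`, the matrix
`M = [[(γ−1)(f' − (γ−1)f'')/ρ, (γ−1)f''/e], [(γ−1)f''/e, ρ(f' − f'')/e²]]`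
is positive definite iff `f' > 0` and `f' − γ f'' > 0`. -/
theorem stmt_12 (γ ρ e f' f'' : ℝ) (hγ : 1 < γ) (hρ : 0 < ρ) (he : 0 < e) :
    Matrix.PosDef
      (!![(γ - 1) * (f' - (γ - 1) * f'') / ρ, (γ - 1) * f'' / e;
          (γ - 1) * f'' / e, ρ * (f' - f'') / e ^ 2] : Matrix (Fin 2) (Fin 2) ℝ)
      ↔ (0 < f' ∧ 0 < f' - γ * f'') := by
  have hdet : (γ - 1) * (f' - (γ - 1) * f'') / ρ * (ρ * (f' - f'') / e ^ 2)
      - ((γ - 1) * f'' / e) ^ 2 = (γ - 1) * (f' * (f' - γ * f'')) / e ^ 2 := by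
    field_simp
    ring
  have hγ₁ : 0 < γ - 1 := sub_pos.mpr hγ
  rw [Matrix.posDef_fin_two_iff, hdet, div_pos_iff_of_pos_right hρ,
    div_pos_iff_of_pos_right (by positivity), mul_pos_iff_of_pos_left hγ₁,
    mul_pos_iff_of_pos_left hγ₁]
  exact sub_mul_pos_and_mul_sub_mul_pos_iff hγ
end

section
/- Let γ > 1, d ≥ 1 and let f : ℝ → ℝ be twice continuously differentiable. On the open set Ω := {(ρ, m, E, B) ∈ ℝ × ℝ^d × ℝ × ℝ^d : ρ > 0 and E − |m|²/(2ρ) − |B|²/2 > 0}, define e(U) := (E − |m|²/(2ρ) − |B|²/2)/ρ, s(U) := ln e(U) − (γ−1) ln ρ, and F(U) := −ρ f(s(U)). Then at each point U ∈ Ω, the Hessian (second derivative bilinear form) of F is positive definite if and only if f'(s(U)) > 0 and f'(s(U)) − γ f''(s(U)) > 0. -/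
open scoped BigOperators

/-- Specific internal energy `e(U) = (E − |m|²/(2ρ) − |B|²/2)/ρ` of an MHD state
`U = (ρ, m, E, B)`. -/
noncomputable def eState {d : ℕ} (U : ℝ × (Fin d → ℝ) × ℝ × (Fin d → ℝ)) : ℝ :=
  (U.2.2.1 - (∑ i, (U.2.1 i) ^ 2) / (2 * U.1) - (∑ i, (U.2.2.2 i) ^ 2) / 2) / U.1

/-- Ideal-gas specific entropy `s(U) = ln e(U) − (γ−1) ln ρ`. -/
noncomputable def sState (γ : ℝ) {d : ℕ} (U : ℝ × (Fin d → ℝ) × ℝ × (Fin d → ℝ)) : ℝ :=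
  Real.log (eState U) - (γ - 1) * Real.log U.1

/-- Generalized entropy `F(U) = −ρ f(s(U))`. -/
noncomputable def FState (γ : ℝ) (f : ℝ → ℝ) {d : ℕ}
    (U : ℝ × (Fin d → ℝ) × ℝ × (Fin d → ℝ)) : ℝ :=
  -(U.1 * f (sState γ U))

/-!
Along a line `t ↦ U + t • v`, with `v = (r, w, X, Y)`, the density is affine and `ρ² e` is a
polynomial, so `s = log (ρ² e) - (γ + 1) log ρ` and the second derivative of `F` can be computed
by one-variable calculus. With `q` the derivative of `s` along `v` and `F₁ = f'(s)`, `F₂ = f''(s)`,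
it is `(ρ F₁ / ρe) K + ρ (F₁ - F₂) q² + 2 (γ - 1) F₁ q r + γ (γ - 1) F₁ r² / ρ`, where
`K = |w - (r / ρ) m|² / ρ + |Y|² ≥ 0` is the second derivative of the kinetic plus magnetic energy.
Since `v ↦ (w - (r / ρ) m, Y, q, r)` is a linear bijection, the form is positive definite iff the
binary form in `(q, r)` is, and its discriminant is `(γ - 1) F₁ (F₁ - γ F₂)`.
-/

open Filter Topology

def HasSecondDerivAt (φ : ℝ → ℝ) (φ₁ φ₂ x : ℝ) : Prop :=
  ∃ φ' : ℝ → ℝ, (∀ᶠ t in 𝓝 x, HasDerivAt φ (φ' t) t) ∧ HasDerivAt φ' φ₂ x ∧ φ' x = φ₁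

namespace HasSecondDerivAt

variable {φ ψ g : ℝ → ℝ} {φ₁ φ₂ ψ₁ ψ₂ g₁ g₂ x : ℝ}

theorem hasDerivAt (h : HasSecondDerivAt φ φ₁ φ₂ x) : HasDerivAt φ φ₁ x := by
  obtain ⟨φ', hφ, -, rfl⟩ := h
  exact hφ.self_of_nhds

theorem deriv_deriv (h : HasSecondDerivAt φ φ₁ φ₂ x) : deriv (deriv φ) x = φ₂ := by
  obtain ⟨φ', hφ, hφ', -⟩ := h
  rw [Filter.EventuallyEq.deriv_eq (hφ.mono fun t ht => ht.deriv), hφ'.deriv]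

theorem congr_deriv (h : HasSecondDerivAt φ φ₁ φ₂ x) (h₁ : φ₁ = ψ₁) (h₂ : φ₂ = ψ₂) :
    HasSecondDerivAt φ ψ₁ ψ₂ x :=
  h₁ ▸ h₂ ▸ h

theorem congr_of_eventuallyEq (h : HasSecondDerivAt φ φ₁ φ₂ x) (hψ : ψ =ᶠ[𝓝 x] φ) :
    HasSecondDerivAt ψ φ₁ φ₂ x := by
  obtain ⟨φ', hφ, hφ', rfl⟩ := h
  refine ⟨φ', ?_, hφ', rfl⟩
  filter_upwards [hφ, hψ.eventuallyEq_nhds] with t ht hψt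
  exact ht.congr_of_eventuallyEq hψt

theorem mul (hφ : HasSecondDerivAt φ φ₁ φ₂ x) (hψ : HasSecondDerivAt ψ ψ₁ ψ₂ x) :
    HasSecondDerivAt (fun t => φ t * ψ t) (φ₁ * ψ x + φ x * ψ₁)
      (φ₂ * ψ x + 2 * φ₁ * ψ₁ + φ x * ψ₂) x := by
  have hφx := hφ.hasDerivAt
  have hψx := hψ.hasDerivAt
  obtain ⟨φ', hφ, hφ', rfl⟩ := hφ
  obtain ⟨ψ', hψ, hψ', rfl⟩ := hψ
  refine ⟨fun t => φ' t * ψ t + φ t * ψ' t, ?_, ?_, rfl⟩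
  · filter_upwards [hφ, hψ] with t h₁ h₂
    exact h₁.mul h₂
  · exact ((hφ'.mul hψx).add (hφx.mul hψ')).congr_deriv (by ring)

theorem sub (hφ : HasSecondDerivAt φ φ₁ φ₂ x) (hψ : HasSecondDerivAt ψ ψ₁ ψ₂ x) :
    HasSecondDerivAt (fun t => φ t - ψ t) (φ₁ - ψ₁) (φ₂ - ψ₂) x := by
  obtain ⟨φ', hφ, hφ', rfl⟩ := hφ
  obtain ⟨ψ', hψ, hψ', rfl⟩ := hψ
  refine ⟨fun t => φ' t - ψ' t, ?_, hφ'.sub hψ', rfl⟩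
  filter_upwards [hφ, hψ] with t h₁ h₂
  exact h₁.sub h₂

theorem const_mul (c : ℝ) (hφ : HasSecondDerivAt φ φ₁ φ₂ x) :
    HasSecondDerivAt (fun t => c * φ t) (c * φ₁) (c * φ₂) x := by
  obtain ⟨φ', hφ, hφ', rfl⟩ := hφ
  exact ⟨fun t => c * φ' t, hφ.mono fun t ht => ht.const_mul c, hφ'.const_mul c, rfl⟩

theorem neg (hφ : HasSecondDerivAt φ φ₁ φ₂ x) : HasSecondDerivAt (fun t => -φ t) (-φ₁) (-φ₂) x := by
  simpa using hφ.const_mul (-1)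

theorem comp (hg : HasSecondDerivAt g g₁ g₂ (φ x)) (hφ : HasSecondDerivAt φ φ₁ φ₂ x) :
    HasSecondDerivAt (fun t => g (φ t)) (g₁ * φ₁) (g₂ * φ₁ ^ 2 + g₁ * φ₂) x := by
  have hφx := hφ.hasDerivAt
  obtain ⟨g', hg, hg', rfl⟩ := hg
  obtain ⟨φ', hφ, hφ', rfl⟩ := hφ
  refine ⟨fun t => g' (φ t) * φ' t, ?_, ?_, rfl⟩
  · filter_upwards [hφ, hφx.continuousAt.eventually hg] with t h₁ h₂
    exact h₂.comp t h₁
  · exact ((hg'.comp x hφx).mul hφ').congr_deriv (by simp only [Function.comp_apply]; ring)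

end HasSecondDerivAt

theorem hasSecondDerivAt_quadratic (a b c x : ℝ) :
    HasSecondDerivAt (fun t => a + t * b + t ^ 2 * c) (b + 2 * x * c) (2 * c) x := by
  refine ⟨fun t => b + 2 * t * c, .of_forall fun t => ?_, ?_, rfl⟩
  · exact (((hasDerivAt_id t).mul_const b).const_add a).add
      ((hasDerivAt_pow 2 t).mul_const c) |>.congr_deriv (by simp)
  · exact (((hasDerivAt_id x).const_mul 2).mul_const c).const_add b |>.congr_deriv (by simp)

theorem hasSecondDerivAt_affine (a b x : ℝ) : HasSecondDerivAt (fun t => a + t * b) b 0 x := by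
  simpa using hasSecondDerivAt_quadratic a b 0 x

theorem ContDiff.hasSecondDerivAt {f : ℝ → ℝ} (hf : ContDiff ℝ 2 f) (y : ℝ) :
    HasSecondDerivAt f (deriv f y) (deriv (deriv f) y) y :=
  ⟨deriv f, .of_forall fun t => (hf.differentiable two_ne_zero t).hasDerivAt,
    (hf.differentiable_deriv_two y).hasDerivAt, rfl⟩

theorem Real.hasSecondDerivAt_log {y : ℝ} (hy : y ≠ 0) :
    HasSecondDerivAt Real.log y⁻¹ (-(y ^ 2)⁻¹) y :=
  ⟨fun t => t⁻¹, (eventually_ne_nhds hy).mono fun _ ht => Real.hasDerivAt_log ht,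
    hasDerivAt_inv hy, rfl⟩

theorem HasSecondDerivAt.log {φ : ℝ → ℝ} {φ₁ φ₂ x : ℝ} (hφ : HasSecondDerivAt φ φ₁ φ₂ x)
    (hx : φ x ≠ 0) :
    HasSecondDerivAt (fun t => Real.log (φ t)) ((φ x)⁻¹ * φ₁)
      (-(φ x ^ 2)⁻¹ * φ₁ ^ 2 + (φ x)⁻¹ * φ₂) x :=
  (Real.hasSecondDerivAt_log hx).comp hφ

theorem ContDiff.comp_hasSecondDerivAt {f φ : ℝ → ℝ} {φ₁ φ₂ x : ℝ} (hf : ContDiff ℝ 2 f)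
    (hφ : HasSecondDerivAt φ φ₁ φ₂ x) :
    HasSecondDerivAt (fun t => f (φ t)) (deriv f (φ x) * φ₁)
      (deriv (deriv f) (φ x) * φ₁ ^ 2 + deriv f (φ x) * φ₂) x :=
  (hf.hasSecondDerivAt (φ x)).comp hφ

theorem ContDiffAt.hasSecondDerivAt_line {E : Type*} [NormedAddCommGroup E] [NormedSpace ℝ E]
    {F : E → ℝ} {U : E} (hF : ContDiffAt ℝ 2 F U) (v : E) :
    HasSecondDerivAt (fun t => F (U + t • v)) (fderiv ℝ F U v)
      (fderiv ℝ (fun W => fderiv ℝ F W v) U v) 0 := by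
  have hline : ∀ t : ℝ, HasDerivAt (fun t : ℝ => U + t • v) v t := fun t => by
    simpa using ((hasDerivAt_id t).smul_const v).const_add U
  have hU : Tendsto (fun t : ℝ => U + t • v) (𝓝 0) (𝓝 U) := by
    simpa using (hline 0).continuousAt.tendsto
  refine ⟨fun t => fderiv ℝ F (U + t • v) v, ?_, ?_, by simp⟩
  · filter_upwards [hU.eventually (hF.eventually (by simp))] with t ht
    exact (ht.differentiableAt two_ne_zero).hasFDerivAt.comp_hasDerivAt t (hline t)
  · have hF' : DifferentiableAt ℝ (fun W => fderiv ℝ F W v) U :=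
      ((hF.fderiv_right (m := 1) (by norm_num)).differentiableAt one_ne_zero).clm_apply
        (differentiableAt_const v)
    exact hF'.hasFDerivAt.comp_hasDerivAt_of_eq 0 (hline 0) (by simp)

theorem quadratic_form_pos_iff {a b c : ℝ} :
    (∀ x y : ℝ, x ≠ 0 ∨ y ≠ 0 → 0 < a * x ^ 2 + 2 * b * x * y + c * y ^ 2)
      ↔ 0 < c ∧ 0 < a * c - b ^ 2 := by
  constructor
  · intro h
    have hc : 0 < c := by simpa using h 0 1 (by norm_num)
    refine ⟨hc, pos_of_mul_pos_right ?_ hc.le⟩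
    calc 0 < a * c ^ 2 + 2 * b * c * (-b) + c * (-b) ^ 2 := h c (-b) (.inl hc.ne')
      _ = c * (a * c - b ^ 2) := by ring
  · rintro ⟨hc, hdisc⟩ x y hxy
    refine pos_of_mul_pos_right ?_ hc.le
    calc 0 < (b * x + c * y) ^ 2 + (a * c - b ^ 2) * x ^ 2 := by
          rcases eq_or_ne x 0 with rfl | hx
          · simpa using pow_two_pos_of_ne_zero (mul_ne_zero hc.ne' (hxy.resolve_left (by simp)))
          · exact add_pos_of_nonneg_of_pos (sq_nonneg _) (mul_pos hdisc (pow_two_pos_of_ne_zero hx))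
      _ = c * (a * x ^ 2 + 2 * b * x * y + c * y ^ 2) := by ring

theorem sum_add_mul_sq {ι R : Type*} [CommRing R] (s : Finset ι) (a b : ι → R) (t : R) :
    ∑ i ∈ s, (a i + t * b i) ^ 2
      = ∑ i ∈ s, a i ^ 2 + t * (2 * ∑ i ∈ s, a i * b i) + t ^ 2 * ∑ i ∈ s, b i ^ 2 := by
  simp only [Finset.mul_sum, ← Finset.sum_add_distrib]
  exact Finset.sum_congr rfl fun i _ => by ring

section

variable {d : ℕ}

noncomputable def intEnergy (U : ℝ × (Fin d → ℝ) × ℝ × (Fin d → ℝ)) : ℝ :=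
  U.2.2.1 - (∑ i, U.2.1 i ^ 2) / (2 * U.1) - (∑ i, U.2.2.2 i ^ 2) / 2

theorem contDiffAt_FState (γ : ℝ) {f : ℝ → ℝ} (hf : ContDiff ℝ 2 f)
    {U : ℝ × (Fin d → ℝ) × ℝ × (Fin d → ℝ)} (hρ : 0 < U.1) (hε : 0 < intEnergy U) :
    ContDiffAt ℝ 2 (FState γ f) U := by
  have he : eState U ≠ 0 := (div_pos hε hρ).ne'
  unfold FState sState eState at *
  fun_prop (disch := first | assumption | positivity)

theorem eState_add_smul (ρ ε r X t : ℝ) (m B w Y : Fin d → ℝ) (ht : ρ + t * r ≠ 0) :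
    eState ((ρ, m, ε + (∑ i, m i ^ 2) / (2 * ρ) + (∑ i, B i ^ 2) / 2, B) + t • (r, w, X, Y)) =
      ((ρ + t * r) * (ε + (∑ i, m i ^ 2) / (2 * ρ) + t * (X - ∑ i, B i * Y i)
          + t ^ 2 * (-(∑ i, Y i ^ 2) / 2))
        - ((∑ i, m i ^ 2) / 2 + t * ∑ i, m i * w i + t ^ 2 * ((∑ i, w i ^ 2) / 2)))
        / (ρ + t * r) ^ 2 := by
  simp only [eState, Prod.mk_add_mk, Prod.smul_mk, smul_eq_mul, Pi.add_apply, Pi.smul_apply,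
    sum_add_mul_sq]
  field_simp
  ring

noncomputable def entropyDeriv (γ : ℝ) (U v : ℝ × (Fin d → ℝ) × ℝ × (Fin d → ℝ)) : ℝ :=
  (v.2.2.1 - (∑ i, U.2.1 i * v.2.1 i) / U.1 + (∑ i, U.2.1 i ^ 2) * v.1 / (2 * U.1 ^ 2)
      - ∑ i, U.2.2.2 i * v.2.2.2 i) / intEnergy U - γ * v.1 / U.1

noncomputable def kineticMagneticHessian (U v : ℝ × (Fin d → ℝ) × ℝ × (Fin d → ℝ)) : ℝ :=
  (∑ i, (v.2.1 i - v.1 / U.1 * U.2.1 i) ^ 2) / U.1 + ∑ i, v.2.2.2 i ^ 2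

theorem hasSecondDerivAt_sState_line (γ : ℝ) (U v : ℝ × (Fin d → ℝ) × ℝ × (Fin d → ℝ))
    (hρ : 0 < U.1) (hε : 0 < intEnergy U) :
    HasSecondDerivAt (fun t => sState γ (U + t • v)) (entropyDeriv γ U v)
      (-(kineticMagneticHessian U v / intEnergy U) - (entropyDeriv γ U v + γ * v.1 / U.1) ^ 2
        + γ * (v.1 / U.1) ^ 2) 0 := by
  obtain ⟨ρ, m, E, B⟩ := U
  obtain ⟨r, w, X, Y⟩ := v
  dsimp only at hρ
  obtain ⟨ε, rfl⟩ : ∃ ε, E = ε + (∑ i, m i ^ 2) / (2 * ρ) + (∑ i, B i ^ 2) / 2 :=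
    ⟨intEnergy (ρ, m, E, B), by simp only [intEnergy]; ring⟩
  have hint : intEnergy (ρ, m, ε + (∑ i, m i ^ 2) / (2 * ρ) + (∑ i, B i ^ 2) / 2, B) = ε := by
    simp only [intEnergy]; ring
  rw [hint] at hε
  have hK : ∑ i, (w i - r / ρ * m i) ^ 2
      = ∑ i, w i ^ 2 + -(r / ρ) * (2 * ∑ i, m i * w i) + (-(r / ρ)) ^ 2 * ∑ i, m i ^ 2 := by
    simpa [sub_eq_add_neg, mul_comm (w _)] using sum_add_mul_sq Finset.univ w m (-(r / ρ))
  simp only [entropyDeriv, kineticMagneticHessian, hint, hK]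
  -- `ρ² e` is a polynomial along the line, and `s = log (ρ² e) - (γ + 1) log ρ`.
  have hρt := hasSecondDerivAt_affine ρ r 0
  have hN := (hρt.mul (hasSecondDerivAt_quadratic (ε + (∑ i, m i ^ 2) / (2 * ρ))
    (X - ∑ i, B i * Y i) (-(∑ i, Y i ^ 2) / 2) 0)).sub
    (hasSecondDerivAt_quadratic ((∑ i, m i ^ 2) / 2) (∑ i, m i * w i) ((∑ i, w i ^ 2) / 2) 0)
  have hρ₀ : 0 < ρ + 0 * r := by simpa using hρ
  have hN₀ : 0 < (ρ + 0 * r) * (ε + (∑ i, m i ^ 2) / (2 * ρ) + 0 * (X - ∑ i, B i * Y i)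
      + 0 ^ 2 * (-(∑ i, Y i ^ 2) / 2))
      - ((∑ i, m i ^ 2) / 2 + 0 * ∑ i, m i * w i + 0 ^ 2 * ((∑ i, w i ^ 2) / 2)) :=
    lt_of_lt_of_eq (mul_pos hρ hε) (by field_simp; ring)
  have hσ := (hN.log hN₀.ne').sub ((hρt.log hρ₀.ne').const_mul (γ + 1))
  refine (hσ.congr_of_eventuallyEq ?_).congr_deriv ?_ ?_
  · filter_upwards [hρt.hasDerivAt.continuousAt.eventually (lt_mem_nhds hρ₀),
      hN.hasDerivAt.continuousAt.eventually (lt_mem_nhds hN₀)] with t hρt hNt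
    rw [sState, eState_add_smul _ _ _ _ _ _ _ _ _ hρt.ne', Real.log_div hNt.ne' (by positivity),
      Real.log_pow]
    simp only [Prod.fst_add, Prod.smul_fst, smul_eq_mul]
    push_cast
    ring
  all_goals
    simp only [zero_mul, mul_zero, add_zero, ne_eq, OfNat.ofNat_ne_zero, not_false_eq_true,
      zero_pow]
    field_simp
    ring

noncomputable def hessianForm (γ F₁ F₂ : ℝ) (U v : ℝ × (Fin d → ℝ) × ℝ × (Fin d → ℝ)) : ℝ :=
  U.1 * F₁ / intEnergy U * kineticMagneticHessian U v
    + (U.1 * (F₁ - F₂) * entropyDeriv γ U v ^ 2 + 2 * ((γ - 1) * F₁) * entropyDeriv γ U v * v.1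
      + γ * (γ - 1) * F₁ / U.1 * v.1 ^ 2)

theorem hasSecondDerivAt_FState_line (γ : ℝ) {f : ℝ → ℝ} (hf : ContDiff ℝ 2 f)
    (U v : ℝ × (Fin d → ℝ) × ℝ × (Fin d → ℝ)) (hρ : 0 < U.1) (hε : 0 < intEnergy U) :
    HasSecondDerivAt (fun t => FState γ f (U + t • v))
      (-(v.1 * f (sState γ U) + U.1 * (deriv f (sState γ U) * entropyDeriv γ U v)))
      (hessianForm γ (deriv f (sState γ U)) (deriv (deriv f) (sState γ U)) U v) 0 := by
  refine (((hasSecondDerivAt_affine U.1 v.1 0).mul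
    (hf.comp_hasSecondDerivAt (hasSecondDerivAt_sState_line γ U v hρ hε))).neg).congr_deriv ?_ ?_
  · simp
  · simp only [hessianForm, zero_smul, add_zero, zero_mul]
    field_simp
    ring

theorem kineticMagneticHessian_nonneg {U : ℝ × (Fin d → ℝ) × ℝ × (Fin d → ℝ)} (hρ : 0 < U.1)
    (v : ℝ × (Fin d → ℝ) × ℝ × (Fin d → ℝ)) : 0 ≤ kineticMagneticHessian U v := by
  unfold kineticMagneticHessian
  positivity

theorem kineticMagneticHessian_pos (γ : ℝ) {U v : ℝ × (Fin d → ℝ) × ℝ × (Fin d → ℝ)}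
    (hρ : 0 < U.1) (hε : 0 < intEnergy U) (hv : v ≠ 0) (hr : v.1 = 0)
    (hq : entropyDeriv γ U v = 0) : 0 < kineticMagneticHessian U v := by
  obtain ⟨r, w, X, Y⟩ := v
  dsimp only at hr
  subst hr
  refine (kineticMagneticHessian_nonneg hρ _).lt_of_ne fun hK => hv ?_
  have hsum : ∀ z : Fin d → ℝ, ∑ i, z i ^ 2 = 0 → z = 0 := fun z hz => funext fun i =>
    pow_eq_zero_iff two_ne_zero |>.mp <|
      (Finset.sum_eq_zero_iff_of_nonneg fun i _ => sq_nonneg (z i)).mp hz i (Finset.mem_univ i)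
  simp only [kineticMagneticHessian, zero_div, zero_mul, sub_zero] at hK
  have hw := hsum w (by
    have := add_eq_zero_iff_of_nonneg (by positivity) (by positivity) |>.mp hK.symm
    exact (div_eq_zero_iff.mp this.1).resolve_right hρ.ne')
  have hY := hsum Y (add_eq_zero_iff_of_nonneg (by positivity) (by positivity) |>.mp hK.symm).2
  subst hw hY
  simp only [entropyDeriv, Pi.zero_apply, mul_zero, Finset.sum_const_zero, zero_div, sub_zero,
    add_zero, div_eq_zero_iff, hε.ne', or_false] at hq
  simp [hq]

theorem entropy_quadratic_form_pos_iff {γ ρ : ℝ} (hγ : 1 < γ) (hρ : 0 < ρ) (F₁ F₂ : ℝ) :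
    (∀ q r : ℝ, q ≠ 0 ∨ r ≠ 0 → 0 < ρ * (F₁ - F₂) * q ^ 2
      + 2 * ((γ - 1) * F₁) * q * r + γ * (γ - 1) * F₁ / ρ * r ^ 2)
      ↔ 0 < F₁ ∧ 0 < F₁ - γ * F₂ := by
  have hγ₁ : 0 < γ - 1 := sub_pos.mpr hγ
  have hdisc : ρ * (F₁ - F₂) * (γ * (γ - 1) * F₁ / ρ) - ((γ - 1) * F₁) ^ 2
      = (γ - 1) * F₁ * (F₁ - γ * F₂) := by
    field_simp
    ring
  rw [quadratic_form_pos_iff, hdisc, mul_div_right_comm,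
    mul_pos_iff_of_pos_left (by positivity : 0 < γ * (γ - 1) / ρ)]
  exact and_congr_right fun hF₁ => mul_pos_iff_of_pos_left (mul_pos hγ₁ hF₁)

theorem hessianForm_pos_iff {γ : ℝ} (hγ : 1 < γ) (F₁ F₂ : ℝ)
    (U : ℝ × (Fin d → ℝ) × ℝ × (Fin d → ℝ)) (hρ : 0 < U.1) (hε : 0 < intEnergy U) :
    (∀ v, v ≠ 0 → 0 < hessianForm γ F₁ F₂ U v) ↔ 0 < F₁ ∧ 0 < F₁ - γ * F₂ := by
  have hbinary := entropy_quadratic_form_pos_iff hγ hρ F₁ F₂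
  rw [← hbinary]
  constructor
  · intro h q r hqr
    set v : ℝ × (Fin d → ℝ) × ℝ × (Fin d → ℝ) := (r, (r / U.1) • U.2.1,
      intEnergy U * (q + γ * r / U.1) + (∑ i, U.2.1 i ^ 2) * r / (2 * U.1 ^ 2), 0)
    have hq : entropyDeriv γ U v = q := by
      simp only [v, entropyDeriv, Pi.smul_apply, smul_eq_mul, Pi.zero_apply, mul_zero,
        Finset.sum_const_zero, sub_zero, mul_left_comm _ (r / U.1), ← Finset.mul_sum, ← sq]
      field_simp
      ring
    have hv : v ≠ 0 := by
      intro hv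
      have hq0 : entropyDeriv γ U v = 0 := by simp [hv, entropyDeriv]
      have hr0 : r = 0 := congrArg Prod.fst hv
      rw [hq] at hq0
      exact hqr.elim (· hq0) (· hr0)
    have hK : kineticMagneticHessian U v = 0 := by simp [v, kineticMagneticHessian]
    simpa [hessianForm, hq, hK] using h v hv
  · intro h v hv
    have hF₁ : 0 < F₁ := (hbinary.mp h).1
    rw [hessianForm]
    by_cases hqr : entropyDeriv γ U v ≠ 0 ∨ v.1 ≠ 0
    · exact add_pos_of_nonneg_of_pos
        (by have := kineticMagneticHessian_nonneg hρ v; positivity) (h _ _ hqr)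
    · obtain ⟨hq, hr⟩ : entropyDeriv γ U v = 0 ∧ v.1 = 0 := by simpa using hqr
      have := kineticMagneticHessian_pos γ hρ hε hv hr hq
      simp only [hq, hr, ne_eq, OfNat.ofNat_ne_zero, not_false_eq_true, zero_pow, mul_zero,
        add_zero]
      positivity

end

theorem stmt_13_general (γ : ℝ) (hγ : 1 < γ) {d : ℕ}
    (f : ℝ → ℝ) (hf : ContDiff ℝ 2 f) :
    ∀ U : ℝ × (Fin d → ℝ) × ℝ × (Fin d → ℝ),
      0 < U.1 → 0 < U.2.2.1 - (∑ i, (U.2.1 i) ^ 2) / (2 * U.1) - (∑ i, (U.2.2.2 i) ^ 2) / 2 →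
      ((∀ v : ℝ × (Fin d → ℝ) × ℝ × (Fin d → ℝ), v ≠ 0 →
          0 < fderiv ℝ (fun W => fderiv ℝ (FState γ f) W v) U v)
        ↔ (0 < deriv f (sState γ U)
            ∧ 0 < deriv f (sState γ U) - γ * deriv (deriv f) (sState γ U))) := by
  intro U hρ hε
  have hessian : ∀ v, fderiv ℝ (fun W => fderiv ℝ (FState γ f) W v) U v
      = hessianForm γ (deriv f (sState γ U)) (deriv (deriv f) (sState γ U)) U v := fun v => by
    rw [← ((contDiffAt_FState γ hf hρ hε).hasSecondDerivAt_line v).deriv_deriv,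
      (hasSecondDerivAt_FState_line γ hf U v hρ hε).deriv_deriv]
  simp_rw [hessian]
  exact hessianForm_pos_iff hγ _ _ U hρ hε

/-- on the set of admissible MHD states (positive density and internal
energy), the Hessian bilinear form of `F = −ρ f(s)` at `U` is positive definite iff
`f'(s(U)) > 0` and `f'(s(U)) − γ f''(s(U)) > 0`. -/
theorem stmt_13 (γ : ℝ) (hγ : 1 < γ) {d : ℕ} (hd : 1 ≤ d)
    (f : ℝ → ℝ) (hf : ContDiff ℝ 2 f) :
    ∀ U : ℝ × (Fin d → ℝ) × ℝ × (Fin d → ℝ),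
      0 < U.1 → 0 < U.2.2.1 - (∑ i, (U.2.1 i) ^ 2) / (2 * U.1) - (∑ i, (U.2.2.2 i) ^ 2) / 2 →
      ((∀ v : ℝ × (Fin d → ℝ) × ℝ × (Fin d → ℝ), v ≠ 0 →
          0 < fderiv ℝ (fun W => fderiv ℝ (FState γ f) W v) U v)
        ↔ (0 < deriv f (sState γ U)
            ∧ 0 < deriv f (sState γ U) - γ * deriv (deriv f) (sState γ U))) :=
  stmt_13_general γ hγ f hf
end
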